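/- For every positive integer n, the number of partitions μ different from the staircase partition δ_n with |μ| = |δ_n| and |μ ∩ δ_n| = |δ_n| − 1 (i.e., partitions obtained from δ_n by first deleting one box and then adding one box in a different position) is exactly n(n−1). -/

import Mathlib

/-!
Comparing `|μ ∩ δ_n|` with `|μ|` and `|δ_n|` shows that `μ - δ_n` and `δ_n - μ` each consist of a
single box, so `μ + e_i = δ_n + e_j` for rows `i ≠ j`: a box leaves row `i` and enters row `j`.
Since the parts `n, n - 1, …, 1, 0, 0, …` of `δ_n` strictly decrease until they reach `0`, the result
is a partition exactly when `i < n`, `j ≤ n` and `j ≠ i + 1`. Different moves give different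
partitions, and there are `n` choices of `i` and `(n + 1) - 2` of `j`.
-/

/-- A partition: a weakly decreasing finitely supported sequence of naturals. -/
def IsPartition (f : ℕ →₀ ℕ) : Prop := ∀ ⦃i j : ℕ⦄, i ≤ j → f j ≤ f i

/-- The size `|λ|` of a partition: the sum of its parts. -/
noncomputable def psize (f : ℕ →₀ ℕ) : ℕ := f.sum fun _ n => n

/-- The intersection of two partitions: pointwise minimum. -/
noncomputable def pinter (f g : ℕ →₀ ℕ) : ℕ →₀ ℕ := Finsupp.zipWith min (min_self 0) f g

/-- Two partitions differ by one box: they are distinct and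
`|λ ∩ μ| = max(|λ|,|μ|) − 1`. -/
noncomputable def DifferByOneBox (f g : ℕ →₀ ℕ) : Prop :=
  f ≠ g ∧ psize (pinter f g) + 1 = max (psize f) (psize g)

/-- The staircase partition `δ_n = (n, n−1, …, 2, 1)` (0-indexed). -/
noncomputable def staircase (n : ℕ) : ℕ →₀ ℕ :=
  Finsupp.onFinset (Finset.range n) (fun i => n - i)
    (fun a ha => Finset.mem_range.mpr (Nat.lt_of_sub_ne_zero ha))

open Finsupp

lemma psize_eq_degree (f : ℕ →₀ ℕ) : psize f = f.degree := rfl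

lemma psize_add (f g : ℕ →₀ ℕ) : psize (f + g) = psize f + psize g := by
  simp only [psize_eq_degree, map_add]

lemma psize_single (i k : ℕ) : psize (single i k) = k := degree_single i k

lemma pinter_apply (f g : ℕ →₀ ℕ) (k : ℕ) : pinter f g k = min (f k) (g k) := rfl

lemma pinter_comm (f g : ℕ →₀ ℕ) : pinter f g = pinter g f := by
  ext k; simp only [pinter_apply, min_comm]

lemma pinter_self (f : ℕ →₀ ℕ) : pinter f f = f := by
  ext k; simp only [pinter_apply, min_self]

lemma pinter_add_tsub (f g : ℕ →₀ ℕ) : pinter f g + (f - g) = f := by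
  ext k; simp only [Finsupp.add_apply, tsub_apply, pinter_apply]; omega

lemma pinter_add_single_of_add_single_eq {f g : ℕ →₀ ℕ} {i j : ℕ} (hij : i ≠ j)
    (h : f + single i 1 = g + single j 1) : pinter f g + single i 1 = g := by
  ext k
  have hk := DFunLike.congr_fun h k
  simp only [Finsupp.add_apply, single_apply, pinter_apply] at hk ⊢
  split_ifs at hk ⊢ <;> omega

lemma psize_eq_and_psize_pinter_add_one_iff {f g : ℕ →₀ ℕ} :
    psize f = psize g ∧ psize (pinter f g) + 1 = psize g ↔
      ∃ i j, i ≠ j ∧ f + single i 1 = g + single j 1 := by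
  constructor
  · rintro ⟨hsize, hinter⟩
    have hgf : psize (g - f) = 1 := by
      have := congrArg psize (pinter_add_tsub g f)
      rw [psize_add, pinter_comm] at this; omega
    have hfg : psize (f - g) = 1 := by
      have := congrArg psize (pinter_add_tsub f g)
      rw [psize_add] at this; omega
    obtain ⟨i, hi⟩ := (sum_eq_one_iff _).1 hgf
    obtain ⟨j, hj⟩ := (sum_eq_one_iff _).1 hfg
    have hf : pinter f g + single j 1 = f := hj ▸ pinter_add_tsub f g
    have hg : pinter f g + single i 1 = g := by
      rw [pinter_comm, ← hi]; exact pinter_add_tsub g f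
    refine ⟨i, j, ?_, ?_⟩
    · rintro rfl
      obtain rfl : f = g := hf.symm.trans hg
      rw [pinter_self] at hinter
      omega
    · calc f + single i 1 = pinter f g + single i 1 + single j 1 := by
            rw [add_right_comm, hf]
        _ = g + single j 1 := by rw [hg]
  · rintro ⟨i, j, hij, h⟩
    have hsize := congrArg psize h
    have hinter := congrArg psize (pinter_add_single_of_add_single_eq hij h)
    simp only [psize_add, psize_single] at hsize hinter
    omega

lemma staircase_apply (n k : ℕ) : staircase n k = n - k := rfl

-- `(i, j)` moves a box from row `i` to row `j`, rows being counted from `0`.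
def boxMoves (n : ℕ) : Finset (ℕ × ℕ) :=
  (Finset.range n ×ˢ Finset.range (n + 1)).filter fun p => p.2 ∉ ({p.1, p.1 + 1} : Finset ℕ)

lemma mem_boxMoves {n i j : ℕ} : (i, j) ∈ boxMoves n ↔ i < n ∧ j ≤ n ∧ j ≠ i ∧ j ≠ i + 1 := by
  simp [boxMoves, and_assoc]

lemma card_boxMoves (n : ℕ) : (boxMoves n).card = n * (n - 1) := by
  have hrow : ∀ i ∈ Finset.range n,
      ((Finset.range (n + 1)).filter fun j => j ∉ ({i, i + 1} : Finset ℕ)).card = n - 1 := by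
    intro i hi
    have hsub : ({i, i + 1} : Finset ℕ) ⊆ Finset.range (n + 1) := by
      simp only [Finset.mem_range] at hi
      simp [Finset.insert_subset_iff]; omega
    rw [Finset.filter_notMem_eq_sdiff, Finset.card_sdiff_of_subset hsub, Finset.card_range,
      Finset.card_pair (Nat.ne_add_one i)]
    omega
  rw [boxMoves, Finset.card_filter, Finset.sum_product]
  simp only [← Finset.card_filter]
  rw [Finset.sum_congr rfl hrow, Finset.sum_const, Finset.card_range, smul_eq_mul]

noncomputable def moveBox (n i j : ℕ) : ℕ →₀ ℕ := staircase n + single j 1 - single i 1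

lemma moveBox_apply (n i j k : ℕ) :
    moveBox n i j k = n - k + (if j = k then 1 else 0) - (if i = k then 1 else 0) := by
  simp only [moveBox, tsub_apply, Finsupp.add_apply, single_apply, staircase_apply]

lemma moveBox_add_single {n i : ℕ} (j : ℕ) (hi : i < n) :
    moveBox n i j + single i 1 = staircase n + single j 1 :=
  tsub_add_cancel_of_le <| le_add_right <| single_le_iff.2 <| by
    rw [staircase_apply]; omega

lemma isPartition_moveBox {n i j : ℕ} (h : (i, j) ∈ boxMoves n) : IsPartition (moveBox n i j) := by
  obtain ⟨hi, hj, hji, hji'⟩ := mem_boxMoves.1 h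
  refine antitone_nat_of_succ_le fun k => ?_
  simp only [moveBox_apply]
  split_ifs <;> omega

lemma mem_boxMoves_of_add_single_eq {n i j : ℕ} {μ : ℕ →₀ ℕ} (hμ : IsPartition μ) (hij : i ≠ j)
    (h : μ + single i 1 = staircase n + single j 1) : (i, j) ∈ boxMoves n := by
  have row (k : ℕ) : μ k + (if i = k then 1 else 0) = n - k + (if j = k then 1 else 0) := by
    simpa only [Finsupp.add_apply, single_apply, staircase_apply] using DFunLike.congr_fun h k
  have hi := row i
  have hj := row j
  simp only [↓reduceIte, if_neg hij, if_neg hij.symm] at hi hj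
  refine mem_boxMoves.2 ⟨by omega, ?_, hij.symm, ?_⟩
  · by_contra! hnj
    have hn := row n
    simp only [if_neg hnj.ne', if_neg (show i ≠ n by omega)] at hn
    have := hμ hnj.le
    omega
  · rintro rfl
    have := hμ (Nat.le_add_right i 1)
    omega

lemma moveBox_injOn (n : ℕ) : Set.InjOn (fun p : ℕ × ℕ => moveBox n p.1 p.2) (boxMoves n) := by
  rintro ⟨i, j⟩ hij ⟨i', j'⟩ hij' (h : moveBox n i j = moveBox n i' j')
  obtain ⟨hi, -, hji, -⟩ := mem_boxMoves.1 hij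
  obtain ⟨hi', -, -, -⟩ := mem_boxMoves.1 hij'
  have hsum : single j 1 + single i' 1 = single j' 1 + single i 1 := by
    refine add_left_cancel (a := staircase n) ?_
    rw [← add_assoc, ← add_assoc, ← moveBox_add_single j hi, ← moveBox_add_single j' hi', h,
      add_right_comm]
  rcases (single_add_single_eq_single_add_single one_ne_zero one_ne_zero).1 hsum with
    ⟨rfl, rfl⟩ | ⟨-, rfl, -⟩ | ⟨h2, -⟩
  · rfl
  · exact absurd rfl hji
  · exact absurd h2 two_ne_zero

lemma setOf_eq_image_moveBox (n : ℕ) :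
    {μ : ℕ →₀ ℕ | IsPartition μ ∧ μ ≠ staircase n ∧ psize μ = psize (staircase n) ∧
      psize (pinter μ (staircase n)) + 1 = psize (staircase n)} =
      ↑((boxMoves n).image fun p => moveBox n p.1 p.2) := by
  ext μ
  simp only [Set.mem_ofPred_eq, Finset.coe_image, Set.mem_image, Finset.mem_coe, Prod.exists]
  constructor
  · rintro ⟨hμ, -, hbox⟩
    obtain ⟨i, j, hij, h⟩ := psize_eq_and_psize_pinter_add_one_iff.1 hbox
    have hmem := mem_boxMoves_of_add_single_eq hμ hij h
    refine ⟨i, j, hmem, add_right_cancel (b := single i 1) ?_⟩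
    rw [moveBox_add_single j (mem_boxMoves.1 hmem).1, h]
  · rintro ⟨i, j, hmem, rfl⟩
    obtain ⟨hi, -, hji, -⟩ := mem_boxMoves.1 hmem
    have hbox := psize_eq_and_psize_pinter_add_one_iff.2 ⟨i, j, hji.symm, moveBox_add_single j hi⟩
    refine ⟨isPartition_moveBox hmem, fun heq => ?_, hbox⟩
    rw [heq, pinter_self] at hbox
    omega

theorem staircase_move_one_box_count_general (n : ℕ) :
    {μ : ℕ →₀ ℕ | IsPartition μ ∧ μ ≠ staircase n ∧ psize μ = psize (staircase n) ∧
      psize (pinter μ (staircase n)) + 1 = psize (staircase n)}.ncard = n * (n - 1) := by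
  rw [setOf_eq_image_moveBox, Set.ncard_coe_finset,
    Finset.card_image_of_injOn (moveBox_injOn n), card_boxMoves]

/-- the number of partitions `μ ≠ δ_n` with `|μ| = |δ_n|` and
`|μ ∩ δ_n| = |δ_n| − 1` is exactly `n(n−1)`. -/
theorem staircase_move_one_box_count (n : ℕ) (hn : 0 < n) :
    {μ : ℕ →₀ ℕ | IsPartition μ ∧ μ ≠ staircase n ∧ psize μ = psize (staircase n) ∧
      psize (pinter μ (staircase n)) + 1 = psize (staircase n)}.ncard = n * (n - 1) :=
  staircase_move_one_box_count_general n
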